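/- In a 2-acyclic Cayley frame, for worlds w₁,…,w_k and sets of agents α₁,…,α_k with β := ⋂ᵢ αᵢ: a world w lies in ⋂ᵢ [wᵢ]_{αᵢ} if and only if ⋂ᵢ [wᵢ]_{αᵢ} = [w]_β. -/

import Mathlib

/-! `[w]_α` is the left coset of `w` modulo the subgroup generated by the generators of the
agents in `α`, so a world of a class determines it. Hence every world `x` of `⋂ᵢ [wᵢ]_{αᵢ}`
turns it into `⋂ᵢ [x]_{αᵢ}`, and 2-acyclicity, applied `k - 1` times, collapses this
intersection to `[x]_{⋂ᵢ αᵢ}`. -/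

def cayleyClass {G : Type*} [Group G] {Γ : Type*} (gen : Γ → Set G)
    (α : Set Γ) (w : G) : Set G :=
  {v | w⁻¹ * v ∈ Subgroup.closure (⋃ a ∈ α, gen a)}

theorem Set.iInter_fin_succ {X : Type*} {n : ℕ} (s : Fin (n + 1) → Set X) :
    ⋂ i, s i = s 0 ∩ ⋂ i : Fin n, s i.succ := by
  ext
  simp [Fin.forall_fin_succ]

theorem map_iInter_fin_succ {X Y : Type*} {F : Set X → Set Y}
    (hF : ∀ a b, F a ∩ F b = F (a ∩ b)) {n : ℕ} (s : Fin (n + 1) → Set X) :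
    ⋂ i, F (s i) = F (⋂ i, s i) := by
  induction n with
  | zero => simp only [Set.iInter_fin_succ, Set.iInter_of_empty, Set.inter_univ]
  | succ n ih => rw [Set.iInter_fin_succ, ih, hF, ← Set.iInter_fin_succ]

section Cayley

open scoped Pointwise

variable {G : Type*} [Group G] {Γ : Type*} (gen : Γ → Set G) (α : Set Γ)

theorem cayleyClass_eq_leftCoset (w : G) :
    cayleyClass gen α w = w • (Subgroup.closure (⋃ a ∈ α, gen a) : Set G) := by
  ext v
  simp [cayleyClass, mem_leftCoset_iff]

theorem mem_cayleyClass_self (w : G) : w ∈ cayleyClass gen α w := by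
  rw [cayleyClass_eq_leftCoset]
  exact mem_own_leftCoset _ w

theorem cayleyClass_eq_iff {w x : G} :
    cayleyClass gen α w = cayleyClass gen α x ↔ x ∈ cayleyClass gen α w := by
  simp only [cayleyClass_eq_leftCoset, leftCoset_eq_iff, mem_leftCoset_iff, SetLike.mem_coe]

end Cayley

theorem stmt6_general (G : Type*) [Group G] (Γ : Type*) (gen : Γ → Set G)
    (h2 : ∀ (w : G) (α β : Set Γ),
      cayleyClass gen α w ∩ cayleyClass gen β w = cayleyClass gen (α ∩ β) w)
    (k : ℕ) (hk : 0 < k) (w : Fin k → G) (α : Fin k → Set Γ) (x : G) :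
    x ∈ ⋂ i, cayleyClass gen (α i) (w i) ↔
      (⋂ i, cayleyClass gen (α i) (w i)) = cayleyClass gen (⋂ i, α i) x := by
  obtain ⟨n, rfl⟩ := Nat.exists_eq_add_one_of_ne_zero hk.ne'
  constructor
  · intro hx
    have hclass : ∀ i, cayleyClass gen (α i) (w i) = cayleyClass gen (α i) x := fun i =>
      (cayleyClass_eq_iff gen (α i)).2 (Set.mem_iInter.1 hx i)
    simp only [hclass]
    exact map_iInter_fin_succ (h2 x) α
  · intro h
    rw [h]
    exact mem_cayleyClass_self gen _ x

/-- In a 2-acyclic Cayley frame, for worlds `w₁,…,w_k` and sets of agents `α₁,…,α_k`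
with `β = ⋂ᵢ αᵢ`: a world `x` lies in `⋂ᵢ [wᵢ]_{αᵢ}` iff `⋂ᵢ [wᵢ]_{αᵢ} = [x]_β`. -/
theorem stmt6 (G : Type*) [Group G] (Γ : Type*) (gen : Γ → Set G)
    (hinv : ∀ a : Γ, ∀ e ∈ gen a, e ≠ 1 ∧ e ^ 2 = 1)
    (hgen : Subgroup.closure (⋃ a : Γ, gen a) = ⊤)
    (h2 : ∀ (w : G) (α β : Set Γ),
      cayleyClass gen α w ∩ cayleyClass gen β w = cayleyClass gen (α ∩ β) w)
    (k : ℕ) (hk : 0 < k) (w : Fin k → G) (α : Fin k → Set Γ) (x : G) :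
    x ∈ ⋂ i, cayleyClass gen (α i) (w i) ↔
      (⋂ i, cayleyClass gen (α i) (w i)) = cayleyClass gen (⋂ i, α i) x :=
  stmt6_general G Γ gen h2 k hk w α x
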